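/- arXiv:1809.09809 — 2 statements merged into one kernel-verified Lean document; each statement's English description precedes it below -/
import Mathlib

section
/- The dual cone of the SOCP cone on the complete graph is the cone of sums of PSD 2×2 principal embeddings: for n ≥ 2, let C2 be the set of n×n complex Hermitian H with H_ii ≥ 0 for all i and H_ii·H_jj ≥ |H_ij|² for all i ≠ j. Then an n×n Hermitian matrix M satisfies tr(H M) ≥ 0 for all H ∈ C2 if and only if M can be written as M = Σ_{i<j} [e_i, e_j] A_{ij} [e_i, e_j]ᵀ, where for each pair i < j, A_{ij} is a 2×2 complex Hermitian positive semidefinite matrix and [e_i, e_j] is the n×2 matrix whose columns are the i-th and j-th standard basis vectors of ℝⁿ. -/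
open Matrix Finset
open scoped ComplexOrder

/-- The `n×n` matrix `[e_i, e_j] A [e_i, e_j]ᵀ` supported on the principal submatrix
indexed by `{i, j}`, with entries given by the `2×2` matrix `A`. -/
noncomputable def emb2 {n : ℕ} (i j : Fin n) (A : Matrix (Fin 2) (Fin 2) ℂ) :
    Matrix (Fin n) (Fin n) ℂ :=
  Matrix.single i i (A 0 0) + Matrix.single i j (A 0 1) +
    Matrix.single j i (A 1 0) + Matrix.single j j (A 1 1)

/-- The SOCP cone on the complete graph: Hermitian `H` with nonnegative diagonal and
`H_ii · H_jj ≥ |H_ij|²` for all `i ≠ j`. -/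
def SOCPConeFull (n : ℕ) : Set (Matrix (Fin n) (Fin n) ℂ) :=
  {H | H.IsHermitian ∧ (∀ i, 0 ≤ (H i i).re) ∧
    ∀ i j, i ≠ j → Complex.normSq (H i j) ≤ (H i i).re * (H j j).re}

/-! For `⇐`, each summand contributes `tr (H_{ij} A_{ij})`, where `H_{ij}` is the principal `2×2`
submatrix of `H` on `{i, j}`; it is PSD by the definition of the cone, and the trace of a product
of PSD matrices is nonnegative.

For `⇒`, testing `M` against `H k l = s k s l U k l`, with `U` the phase pattern of `-M` and ones
on the diagonal, shows that the comparison matrix `N` (`N i i = re M i i`, `N i j = -‖M i j‖`) is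
PSD. A PSD Z-matrix has factor width two: for `N + ε • 1` the minimiser `x` of the quadratic form
on the simplex is a positive vector with `(N + ε • 1) x > 0`, and rescaling by `x` splits every
diagonal entry over the pairs `{i, j}` so that `d i j * d j i ≥ N i j ^ 2`; compactness lets
`ε → 0`. The blocks `!![d i j, M i j; M j i, d j i]` are then PSD and sum to `M`. -/

open Filter Topology

namespace Matrix

section PosSemidef

variable {𝕜 ι : Type*} [RCLike 𝕜] [Fintype ι]

open scoped MatrixOrder in
theorem PosSemidef.trace_mul_nonneg {A B : Matrix ι ι 𝕜} (hA : A.PosSemidef)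
    (hB : B.PosSemidef) : 0 ≤ (A * B).trace := by
  classical
  obtain ⟨C, rfl⟩ := CStarAlgebra.nonneg_iff_eq_star_mul_self.mp hB.nonneg
  rw [star_eq_conjTranspose, ← mul_assoc, trace_mul_comm, ← mul_assoc]
  exact (hA.mul_mul_conjTranspose_same C).trace_nonneg

theorem posSemidef_fin_two_iff {A : Matrix (Fin 2) (Fin 2) 𝕜} :
    A.PosSemidef ↔ A.IsHermitian ∧ 0 ≤ A.trace ∧ 0 ≤ A.det := by
  refine ⟨fun h => ⟨h.isHermitian, h.trace_nonneg, h.det_nonneg⟩, fun ⟨hA, htr, hdet⟩ => ?_⟩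
  rw [hA.trace_eq_sum_eigenvalues, Fin.sum_univ_two, ← RCLike.ofReal_add,
    RCLike.ofReal_nonneg] at htr
  rw [hA.det_eq_prod_eigenvalues, Fin.prod_univ_two, ← RCLike.ofReal_mul,
    RCLike.ofReal_nonneg] at hdet
  rw [hA.posSemidef_iff_eigenvalues_nonneg]
  intro i
  fin_cases i <;> simp <;> nlinarith [mul_self_nonneg (hA.eigenvalues 0 - hA.eigenvalues 1)]

theorem posSemidef_of_normSq_le {a b : ℝ} {z : ℂ} (ha : 0 ≤ a) (hb : 0 ≤ b)
    (h : Complex.normSq z ≤ a * b) : !![(a : ℂ), z; star z, (b : ℂ)].PosSemidef := by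
  refine posSemidef_fin_two_iff.mpr ⟨?_, ?_, ?_⟩
  · ext i j
    fin_cases i <;> fin_cases j <;> simp [Complex.conj_ofReal]
  · rw [trace_fin_two_of, ← Complex.ofReal_add, Complex.zero_le_real]
    positivity
  · rw [det_fin_two_of, Complex.star_def, Complex.mul_conj, ← Complex.ofReal_mul,
      ← Complex.ofReal_sub, Complex.zero_le_real]
    linarith

end PosSemidef

section ZMatrix

variable {ι : Type*} [Fintype ι]

theorem IsSymm.dotProduct_add_smul_mulVec {R : Type*} [CommRing R] {N : Matrix ι ι R}
    (hN : N.IsSymm) (x w : ι → R) (t : R) :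
    (x + t • w) ⬝ᵥ N *ᵥ (x + t • w) =
      x ⬝ᵥ N *ᵥ x + 2 * t * (w ⬝ᵥ N *ᵥ x) + t ^ 2 * (w ⬝ᵥ N *ᵥ w) := by
  have hswap : x ⬝ᵥ N *ᵥ w = w ⬝ᵥ N *ᵥ x := by
    rw [dotProduct_mulVec, ← hN.eq, vecMul_transpose, dotProduct_comm, hN.eq]
  simp only [mulVec_add, mulVec_smul, add_dotProduct, dotProduct_add, smul_dotProduct,
    dotProduct_smul, smul_eq_mul, hswap]
  ring

theorem IsSymm.dotProduct_sub_mulVec_nonneg_of_isMinOn {N : Matrix ι ι ℝ} (hN : N.IsSymm)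
    {S : Set (ι → ℝ)} (hS : Convex ℝ S) {x y : ι → ℝ} (hx : x ∈ S) (hy : y ∈ S)
    (hmin : IsMinOn (fun z => z ⬝ᵥ N *ᵥ z) S x) : 0 ≤ (y - x) ⬝ᵥ N *ᵥ x := by
  set a := (y - x) ⬝ᵥ N *ᵥ x
  set b := (y - x) ⬝ᵥ N *ᵥ (y - x)
  have hslope : ∀ t ∈ Set.Ioo (0 : ℝ) 1, 0 ≤ 2 * a + t * b := fun t ht => by
    have h : x ⬝ᵥ N *ᵥ x ≤ (x + t • (y - x)) ⬝ᵥ N *ᵥ (x + t • (y - x)) :=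
      hmin (hS.add_smul_sub_mem hx hy (Set.Ioo_subset_Icc_self ht))
    rw [hN.dotProduct_add_smul_mulVec] at h
    have : 0 ≤ t * (2 * a + t * b) := by linarith
    exact nonneg_of_mul_nonneg_right this ht.1
  have hlim : Tendsto (fun t => 2 * a + t * b) (𝓝[>] 0) (𝓝 (2 * a)) := by
    have : Continuous fun t : ℝ => 2 * a + t * b := by fun_prop
    simpa using (this.tendsto 0).mono_left nhdsWithin_le_nhds
  linarith [ge_of_tendsto hlim (eventually_of_mem (Ioo_mem_nhdsGT one_pos) hslope)]

theorem mulVec_apply_nonpos_of_apply_eq_zero {N : Matrix ι ι ℝ}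
    (hZ : ∀ i j, i ≠ j → N i j ≤ 0) {x : ι → ℝ} (hx : 0 ≤ x) {i : ι} (hi : x i = 0) :
    (N *ᵥ x) i ≤ 0 := by
  refine Finset.sum_nonpos fun j _ => ?_
  rcases eq_or_ne i j with rfl | hij
  · simp [hi]
  · exact mul_nonpos_of_nonpos_of_nonneg (hZ i j hij) (hx j)

variable [DecidableEq ι]

theorem IsSymm.exists_pos_mulVec_pos [Nonempty ι] {N : Matrix ι ι ℝ} (hN : N.IsSymm)
    (hZ : ∀ i j, i ≠ j → N i j ≤ 0) (hpos : ∀ x ∈ stdSimplex ℝ ι, 0 < x ⬝ᵥ N *ᵥ x) :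
    ∃ x : ι → ℝ, (∀ i, 0 < x i) ∧ ∀ i, 0 < (N *ᵥ x) i := by
  have hq : Continuous fun z : ι → ℝ => z ⬝ᵥ N *ᵥ z := by fun_prop
  obtain ⟨x, hx, hmin⟩ := (isCompact_stdSimplex ℝ ι).exists_isMinOn
    ⟨_, single_mem_stdSimplex ℝ (Classical.arbitrary ι)⟩ hq.continuousOn
  have hNx : ∀ i, 0 < (N *ᵥ x) i := fun i => by
    have h := hN.dotProduct_sub_mulVec_nonneg_of_isMinOn (convex_stdSimplex ℝ ι) hx
      (single_mem_stdSimplex ℝ i) hmin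
    rw [sub_dotProduct, single_dotProduct, one_mul] at h
    linarith [hpos x hx]
  exact ⟨x, fun i => (hx.1 i).lt_of_ne' fun h0 =>
    (hNx i).not_ge (mulVec_apply_nonpos_of_apply_eq_zero hZ hx.1 h0), hNx⟩

/-- The blocks `!![d i j, N i j; N j i, d j i]` are PSD and, placed on the rows and columns
`{i, j}` with `i < j`, sum to `N`. -/
structure IsPairSplit (N : Matrix ι ι ℝ) (d : ι → ι → ℝ) : Prop where
  nonneg : ∀ i j, 0 ≤ d i j
  diag : ∀ i, d i i = 0
  sum : ∀ i, ∑ j, d i j = N i i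
  sq_le_mul : ∀ i j, i ≠ j → N i j ^ 2 ≤ d i j * d j i

/-- Take `d i j = (-N i j * x j + r i) / x i`, sharing the slack `(N x) i` equally as `r i` among
the `card ι - 1` pairs through `i`. -/
theorem IsSymm.exists_isPairSplit_of_pos_of_mulVec_nonneg [Nontrivial ι] {N : Matrix ι ι ℝ}
    (hN : N.IsSymm) (hZ : ∀ i j, i ≠ j → N i j ≤ 0) {x : ι → ℝ} (hx : ∀ i, 0 < x i)
    (hNx : ∀ i, 0 ≤ (N *ᵥ x) i) : ∃ d, IsPairSplit N d := by
  have hcard : (0 : ℝ) < Fintype.card ι - 1 := by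
    rw [sub_pos]
    exact_mod_cast Fintype.one_lt_card (α := ι)
  set r : ι → ℝ := fun i => (N *ᵥ x) i / (Fintype.card ι - 1)
  have hr : ∀ i, 0 ≤ r i := fun i => div_nonneg (hNx i) hcard.le
  have hoff : ∀ i j, i ≠ j → 0 ≤ -N i j * x j / x i := fun i j hij =>
    div_nonneg (mul_nonneg (neg_nonneg.mpr (hZ i j hij)) (hx j).le) (hx i).le
  refine ⟨fun i j => if i = j then 0 else (-N i j * x j + r i) / x i, fun i j => ?_,
    fun i => if_pos rfl, fun i => ?_, fun i j hij => ?_⟩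
  · split_ifs with hij
    · exact le_rfl
    · exact div_nonneg (add_nonneg (mul_nonneg (neg_nonneg.mpr (hZ i j hij)) (hx j).le) (hr i))
        (hx i).le
  · have hrow : ∑ j ∈ Finset.univ.erase i, N i j * x j = (N *ᵥ x) i - N i i * x i := by
      rw [mulVec, dotProduct, ← Finset.add_sum_erase _ _ (Finset.mem_univ i)]
      ring
    rw [← Finset.add_sum_erase _ _ (Finset.mem_univ i), if_pos rfl, zero_add,
      Finset.sum_congr rfl fun j hj => if_neg (Finset.ne_of_mem_erase hj).symm, ← Finset.sum_div,
      Finset.sum_add_distrib, Finset.sum_const, Finset.card_erase_of_mem (Finset.mem_univ i),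
      Finset.card_univ, nsmul_eq_mul]
    simp only [neg_mul, Finset.sum_neg_distrib, hrow, r]
    rw [Nat.cast_sub Fintype.card_pos, Nat.cast_one]
    field_simp [(hx i).ne', hcard.ne']
    ring
  · simp only [if_neg hij, if_neg (Ne.symm hij)]
    have hij' : -N i j * x j / x i ≤ (-N i j * x j + r i) / x i :=
      div_le_div_of_nonneg_right (le_add_of_nonneg_right (hr i)) (hx i).le
    have hji' : -N j i * x i / x j ≤ (-N j i * x i + r j) / x j :=
      div_le_div_of_nonneg_right (le_add_of_nonneg_right (hr j)) (hx j).le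
    calc N i j ^ 2 = (-N i j * x j / x i) * (-N j i * x i / x j) := by
          rw [hN.apply i j]
          field_simp [(hx i).ne', (hx j).ne']
      _ ≤ _ := mul_le_mul hij' hji' (hoff j i (Ne.symm hij)) ((hoff i j hij).trans hij')

theorem PosSemidef.exists_isPairSplit_add_smul_one [Nontrivial ι] {N : Matrix ι ι ℝ}
    (hN : N.PosSemidef) (hZ : ∀ i j, i ≠ j → N i j ≤ 0) {ε : ℝ} (hε : 0 < ε) :
    ∃ d, IsPairSplit (N + ε • 1) d := by
  have hsymm : (N + ε • 1).IsSymm :=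
    (isHermitian_iff_isSymm.mp hN.isHermitian).add (isSymm_one.smul ε)
  have hZ' : ∀ i j, i ≠ j → (N + ε • 1) i j ≤ 0 := fun i j hij => by
    simpa [one_apply_ne hij] using hZ i j hij
  have hpos : ∀ x ∈ stdSimplex ℝ ι, 0 < x ⬝ᵥ (N + ε • 1) *ᵥ x := fun x hx => by
    have hx0 : x ≠ 0 := fun h => by simpa [h] using hx.2
    have hxx : 0 < x ⬝ᵥ x :=
      lt_of_le_of_ne (Finset.sum_nonneg fun i _ => mul_self_nonneg (x i))
        (Ne.symm (dotProduct_self_eq_zero.not.mpr hx0))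
    have hNx : 0 ≤ x ⬝ᵥ N *ᵥ x := by simpa using hN.dotProduct_mulVec_nonneg x
    rw [add_mulVec, smul_mulVec, one_mulVec, dotProduct_add, dotProduct_smul, smul_eq_mul]
    positivity
  obtain ⟨x, hx, hNx⟩ := hsymm.exists_pos_mulVec_pos hZ' hpos
  exact hsymm.exists_isPairSplit_of_pos_of_mulVec_nonneg hZ' hx fun i => (hNx i).le

theorem exists_isPairSplit_of_forall_add_smul_one {N : Matrix ι ι ℝ}
    (h : ∀ ε : ℝ, 0 < ε → ∃ d, IsPairSplit (N + ε • 1) d) : ∃ d, IsPairSplit N d := by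
  set ε : ℕ → ℝ := fun k => 1 / ((k : ℝ) + 1)
  choose ds hds using fun k => h (ε k) (by positivity)
  have hbox : ∀ k, ds k ∈ Set.univ.pi fun i => Set.univ.pi fun _ => Set.Icc 0 (N i i + 1) := by
    intro k
    simp only [Set.mem_univ_pi]
    refine fun i j => ⟨(hds k).nonneg i j, ?_⟩
    calc ds k i j ≤ ∑ j, ds k i j :=
          Finset.single_le_sum (fun j _ => (hds k).nonneg i j) (Finset.mem_univ j)
      _ = N i i + ε k := by simp [(hds k).sum]
      _ ≤ N i i + 1 := by
          gcongr
          exact div_le_one_of_le₀ (by simp) (by positivity)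
  obtain ⟨d, -, φ, hφ, hlim⟩ :=
    (isCompact_univ_pi fun i => isCompact_univ_pi fun _ => isCompact_Icc).tendsto_subseq hbox
  have hentry : ∀ i j, Tendsto (fun k => ds (φ k) i j) atTop (𝓝 (d i j)) := fun i j =>
    tendsto_pi_nhds.mp (tendsto_pi_nhds.mp hlim i) j
  have hε : Tendsto (fun k => ε (φ k)) atTop (𝓝 0) :=
    tendsto_one_div_add_atTop_nhds_zero_nat.comp hφ.tendsto_atTop
  refine ⟨d, fun i j => ge_of_tendsto' (hentry i j) fun k => (hds _).nonneg i j,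
    fun i => tendsto_nhds_unique (hentry i i) (by simp [(hds _).diag]), fun i => ?_,
    fun i j hij => ge_of_tendsto' ((hentry i j).mul (hentry j i)) fun k => ?_⟩
  · refine tendsto_nhds_unique (tendsto_finsetSum _ fun j _ => hentry i j) ?_
    simpa [(hds _).sum] using tendsto_const_nhds.add hε
  · simpa [one_apply_ne hij] using (hds (φ k)).sq_le_mul i j hij

theorem PosSemidef.exists_isPairSplit [Nontrivial ι] {N : Matrix ι ι ℝ} (hN : N.PosSemidef)
    (hZ : ∀ i j, i ≠ j → N i j ≤ 0) : ∃ d, IsPairSplit N d :=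
  exists_isPairSplit_of_forall_add_smul_one fun _ hε => hN.exists_isPairSplit_add_smul_one hZ hε

end ZMatrix

end Matrix

theorem Finset.sum_filter_lt_add_swap {ι M : Type*} [Fintype ι] [LinearOrder ι]
    [AddCommMonoid M] (f : ι → ι → M) :
    ∑ p ∈ univ.filter (fun p : ι × ι => p.1 < p.2), (f p.1 p.2 + f p.2 p.1) =
      ∑ i, ∑ j ∈ univ.erase i, f i j := by
  have hswap : ∑ p ∈ univ.filter (fun p : ι × ι => p.1 < p.2), f p.2 p.1 =
      ∑ p ∈ univ.filter (fun p : ι × ι => p.2 < p.1), f p.1 p.2 :=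
    Finset.sum_nbij' Prod.swap Prod.swap (by simp) (by simp) (by simp) (by simp) (by simp)
  have hsplit : univ.filter (fun p : ι × ι => p.1 ≠ p.2) =
      univ.filter (fun p : ι × ι => p.1 < p.2) ∪ univ.filter (fun p : ι × ι => p.2 < p.1) := by
    rw [← Finset.filter_or]
    simp only [ne_iff_lt_or_gt]
  rw [Finset.sum_add_distrib, hswap, ← Finset.sum_union (Finset.disjoint_filter.mpr
    fun p _ h => lt_asymm h), ← hsplit, Finset.sum_filter, Fintype.sum_prod_type]
  refine Finset.sum_congr rfl fun i _ => ?_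
  rw [← Finset.sum_filter, Finset.filter_ne]

theorem trace_mul_emb2 {n : ℕ} (H : Matrix (Fin n) (Fin n) ℂ) (i j : Fin n)
    (A : Matrix (Fin 2) (Fin 2) ℂ) :
    (H * emb2 i j A).trace = (H.submatrix ![i, j] ![i, j] * A).trace := by
  simp only [emb2, mul_add, trace_add, trace_mul_single, op_smul_eq_mul, trace_fin_two, mul_apply,
    Fin.sum_univ_two, submatrix_apply, cons_val_zero, cons_val_one]
  ring

theorem sum_emb2_eq {n : ℕ} (M : Matrix (Fin n) (Fin n) ℂ) (d : Fin n → Fin n → ℂ)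
    (hd : ∀ i, ∑ j ∈ univ.erase i, d i j = M i i) :
    ∑ p ∈ univ.filter (fun p : Fin n × Fin n => p.1 < p.2),
      emb2 p.1 p.2 !![d p.1 p.2, M p.1 p.2; M p.2 p.1, d p.2 p.1] = M := by
  set g : Fin n → Fin n → Matrix (Fin n) (Fin n) ℂ := fun i j =>
    single i i (d i j) + single i j (M i j)
  calc _ = ∑ p ∈ univ.filter (fun p : Fin n × Fin n => p.1 < p.2), (g p.1 p.2 + g p.2 p.1) :=
        Finset.sum_congr rfl fun p _ => by
          simp only [emb2, g, of_apply, cons_val', cons_val_zero, cons_val_one, empty_val',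
            cons_val_fin_one]
          abel
    _ = ∑ i, ∑ j ∈ univ.erase i, g i j := Finset.sum_filter_lt_add_swap g
    _ = ∑ i, (single i i (M i i) + ∑ j ∈ univ.erase i, single i j (M i j)) := by
        refine Finset.sum_congr rfl fun i _ => ?_
        rw [Finset.sum_add_distrib, ← hd i, ← singleAddMonoidHom_apply, map_sum]
        rfl
    _ = ∑ i, ∑ j, single i j (M i j) := Finset.sum_congr rfl fun i _ =>
        Finset.add_sum_erase _ (fun j => single i j (M i j)) (mem_univ i)
    _ = M := (matrix_eq_sum_single M).symm

theorem Complex.norm_div_norm_le_one (z : ℂ) : ‖z / ‖z‖‖ ≤ 1 := by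
  rw [norm_div, Complex.norm_real, norm_norm]
  exact div_self_le_one _

section Comparison

variable {ι : Type*} [DecidableEq ι]

noncomputable def comparisonMatrix (M : Matrix ι ι ℂ) : Matrix ι ι ℝ :=
  of fun i j => if i = j then (M i i).re else -‖M i j‖

/-- `M k l / ‖M k l‖` is the phase of `M k l`, and `0` when `M k l = 0` since `x / 0 = 0`. -/
noncomputable def socpTestMatrix (M : Matrix ι ι ℂ) (s : ι → ℝ) : Matrix ι ι ℂ :=
  of fun k l => (s k * s l : ℂ) * if k = l then 1 else -(M k l / ‖M k l‖)

theorem comparisonMatrix_apply_of_ne (M : Matrix ι ι ℂ) {i j : ι} (hij : i ≠ j) :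
    comparisonMatrix M i j = -‖M i j‖ :=
  if_neg hij

theorem re_socpTestMatrix_mul_apply {M : Matrix ι ι ℂ} (hM : M.IsHermitian) (s : ι → ℝ)
    (k l : ι) : (socpTestMatrix M s k l * M l k).re = s k * comparisonMatrix M k l * s l := by
  rcases eq_or_ne k l with rfl | hkl
  · simp [socpTestMatrix, comparisonMatrix, ← Complex.ofReal_mul]
    ring
  · have hphase : M k l / ‖M k l‖ * M l k = ‖M k l‖ := by
      rw [← hM.apply l k, div_mul_eq_mul_div, Complex.star_def, Complex.mul_conj',
        ← Complex.ofReal_pow, ← Complex.ofReal_div, sq, mul_self_div_self]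
    simp only [socpTestMatrix, of_apply, if_neg hkl, comparisonMatrix_apply_of_ne M hkl]
    rw [mul_neg, neg_mul, mul_assoc, hphase, ← Complex.ofReal_mul, ← Complex.ofReal_mul]
    simp only [Complex.neg_re, Complex.ofReal_re]
    ring

theorem re_trace_socpTestMatrix_mul [Fintype ι] {M : Matrix ι ι ℂ} (hM : M.IsHermitian)
    (s : ι → ℝ) : ((socpTestMatrix M s * M).trace).re = s ⬝ᵥ comparisonMatrix M *ᵥ s := by
  simp only [trace, Matrix.diag, mul_apply, Complex.re_sum, re_socpTestMatrix_mul_apply hM,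
    dotProduct, mulVec, Finset.mul_sum]
  exact Finset.sum_congr rfl fun k _ => Finset.sum_congr rfl fun l _ => by ring

end Comparison

namespace SOCPConeFull

variable {n : ℕ}

theorem socpTestMatrix_mem {M : Matrix (Fin n) (Fin n) ℂ} (hM : M.IsHermitian)
    (s : Fin n → ℝ) : socpTestMatrix M s ∈ SOCPConeFull n := by
  have hdiag : ∀ k, socpTestMatrix M s k k = ((s k * s k : ℝ) : ℂ) := fun k => by
    simp [socpTestMatrix]
  refine ⟨?_, fun k => by simpa [hdiag k] using mul_self_nonneg (s k), fun k l hkl => ?_⟩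
  · ext k l
    rcases eq_or_ne k l with rfl | hkl
    · simp [hdiag k, Complex.conj_ofReal]
    · simp only [conjTranspose_apply, socpTestMatrix, of_apply, if_neg hkl, if_neg hkl.symm,
        star_mul', star_neg, star_div₀, ← hM.apply k l, Complex.star_def, Complex.conj_ofReal,
        Complex.norm_conj]
      ring
  · rw [hdiag k, hdiag l, Complex.ofReal_re, Complex.ofReal_re, Complex.normSq_eq_norm_sq]
    simp only [socpTestMatrix, of_apply, if_neg hkl, norm_mul, norm_neg, Complex.norm_real,
      Real.norm_eq_abs, mul_pow, sq_abs, ← Complex.ofReal_mul]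
    calc s k ^ 2 * s l ^ 2 * ‖M k l / ‖M k l‖‖ ^ 2 ≤ s k ^ 2 * s l ^ 2 * 1 := by
          gcongr
          exact pow_le_one₀ (norm_nonneg _) (Complex.norm_div_norm_le_one _)
      _ = s k * s k * (s l * s l) := by ring

theorem comparisonMatrix_posSemidef_of_dual {M : Matrix (Fin n) (Fin n) ℂ} (hM : M.IsHermitian)
    (hdual : ∀ H ∈ SOCPConeFull n, 0 ≤ ((H * M).trace).re) :
    (comparisonMatrix M).PosSemidef := by
  refine .of_dotProduct_mulVec_nonneg (isHermitian_iff_isSymm.mpr ?_) fun s => ?_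
  · ext i j
    rcases eq_or_ne i j with rfl | hij
    · rfl
    · rw [transpose_apply, comparisonMatrix_apply_of_ne M hij,
        comparisonMatrix_apply_of_ne M hij.symm, ← hM.apply i j, norm_star]
  · rw [star_trivial, ← re_trace_socpTestMatrix_mul hM]
    exact hdual _ (socpTestMatrix_mem hM s)

theorem posSemidef_submatrix {H : Matrix (Fin n) (Fin n) ℂ} (hH : H ∈ SOCPConeFull n)
    {i j : Fin n} (hij : i ≠ j) : (H.submatrix ![i, j] ![i, j]).PosSemidef := by
  obtain ⟨hherm, hdiag, hoff⟩ := hH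
  have h : H.submatrix ![i, j] ![i, j] =
      !![((H i i).re : ℂ), H i j; star (H i j), ((H j j).re : ℂ)] := by
    ext a b
    fin_cases a <;> fin_cases b
    exacts [(hherm.coe_re_apply_self i).symm, rfl, (hherm.apply j i).symm,
      (hherm.coe_re_apply_self j).symm]
  rw [h]
  exact posSemidef_of_normSq_le (hdiag i) (hdiag j) (hoff i j hij)

theorem re_trace_mul_emb2_nonneg {H : Matrix (Fin n) (Fin n) ℂ} (hH : H ∈ SOCPConeFull n)
    {i j : Fin n} (hij : i ≠ j) {A : Matrix (Fin 2) (Fin 2) ℂ} (hA : A.PosSemidef) :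
    0 ≤ ((H * emb2 i j A).trace).re := by
  rw [trace_mul_emb2]
  exact (Complex.nonneg_iff.mp ((posSemidef_submatrix hH hij).trace_mul_nonneg hA)).1

end SOCPConeFull

/-- The dual cone of the SOCP cone on the complete graph is exactly the cone of sums of
positive semidefinite `2×2` principal embeddings. -/
theorem dualCone_SOCPConeFull (n : ℕ) (hn : 2 ≤ n)
    (M : Matrix (Fin n) (Fin n) ℂ) (hM : M.IsHermitian) :
    (∀ H ∈ SOCPConeFull n, 0 ≤ ((H * M).trace).re) ↔
      ∃ A : Fin n → Fin n → Matrix (Fin 2) (Fin 2) ℂ,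
        (∀ i j : Fin n, i < j → (A i j).IsHermitian ∧ (A i j).PosSemidef) ∧
        M = ∑ p ∈ Finset.univ.filter (fun p : Fin n × Fin n => p.1 < p.2),
              emb2 p.1 p.2 (A p.1 p.2) := by
  constructor
  · intro hdual
    have : Nontrivial (Fin n) := Fin.nontrivial_iff_two_le.mpr hn
    obtain ⟨d, hd⟩ := (SOCPConeFull.comparisonMatrix_posSemidef_of_dual hM hdual).exists_isPairSplit
      fun i j hij => by simp [comparisonMatrix_apply_of_ne M hij]
    have hA : ∀ i j, i ≠ j → !![(d i j : ℂ), M i j; M j i, (d j i : ℂ)].PosSemidef := by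
      intro i j hij
      rw [← hM.apply j i]
      refine posSemidef_of_normSq_le (hd.nonneg i j) (hd.nonneg j i) ?_
      simpa [comparisonMatrix_apply_of_ne M hij, Complex.normSq_eq_norm_sq] using
        hd.sq_le_mul i j hij
    refine ⟨fun i j => !![(d i j : ℂ), M i j; M j i, (d j i : ℂ)],
      fun i j hij => ⟨(hA i j hij.ne).isHermitian, hA i j hij.ne⟩,
      (sum_emb2_eq M (fun i j => d i j) fun i => ?_).symm⟩
    rw [← Complex.ofReal_sum, Finset.sum_erase _ (hd.diag i), hd.sum, comparisonMatrix,
      of_apply, if_pos rfl]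
    exact hM.coe_re_apply_self i
  · rintro ⟨A, hA, rfl⟩ H hH
    rw [Finset.mul_sum, trace_sum, Complex.re_sum]
    refine Finset.sum_nonneg fun p hp => ?_
    have hlt := (mem_filter.mp hp).2
    exact SOCPConeFull.re_trace_mul_emb2_nonneg hH hlt.ne (hA _ _ hlt).2
end

section
/- The dual cone of the real parabolic cone on the complete graph is the cone of diagonally dominant matrices: for n ≥ 2, let C3 be the set of n×n real symmetric matrices H with H_ii ≥ 0 for all i and H_ii + H_jj ≥ 2|H_ij| for all i ≠ j. Then an n×n real symmetric matrix M satisfies tr(H M) ≥ 0 for all H ∈ C3 if and only if M_ii ≥ Σ_{j ≠ i} |M_ij| for every i ∈ {1,…,n}. -/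
open Matrix Finset

/-- The real parabolic cone on the complete graph: real symmetric `H` with nonnegative
diagonal and `H_ii + H_jj ≥ 2|H_ij|` for all `i ≠ j`. -/
def ParabolicConeFullR (n : ℕ) : Set (Matrix (Fin n) (Fin n) ℝ) :=
  {H | H.IsSymm ∧ (∀ i, 0 ≤ H i i) ∧ ∀ i j, i ≠ j → 2 * |H i j| ≤ H i i + H j j}

/-!
For symmetric `M`, `tr (H M) = ∑ᵢⱼ Hᵢⱼ Mᵢⱼ`, and the cone condition bounds each off-diagonal
term below by `-(Hᵢᵢ + Hⱼⱼ)/2 · |Mᵢⱼ|`. Since `|M|` is symmetric, the two halves of these bounds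
contribute equally, so `tr (H M) ≥ ∑ᵢ Hᵢᵢ (Mᵢᵢ - ∑_{j ≠ i} |Mᵢⱼ|) ≥ 0` when `M` is diagonally
dominant. Conversely, the matrix with `1` at `(i, i)`, `-sign Mᵢⱼ / 2` at `(i, j)` and `(j, i)`
and `0` elsewhere lies in the cone, and its pairing with `M` is exactly `Mᵢᵢ - ∑_{j ≠ i} |Mᵢⱼ|`.
-/

variable {ι : Type*} [Fintype ι]

theorem Matrix.trace_mul_eq_sum_mul_apply {R : Type*} [NonUnitalNonAssocSemiring R]
    (H : Matrix ι ι R) {M : Matrix ι ι R} (hM : M.IsSymm) :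
    (H * M).trace = ∑ i, ∑ j, H i j * M i j := by
  simp [trace, mul_apply, hM.apply]

variable [DecidableEq ι]

theorem Finset.sum_sum_erase_comm {β : Type*} [AddCommMonoid β] (f : ι → ι → β) :
    ∑ i, ∑ j ∈ univ.erase i, f i j = ∑ i, ∑ j ∈ univ.erase i, f j i :=
  sum_comm' fun i j => by simp [and_comm, ne_comm]

theorem Finset.sum_sum_erase_average_mul {f : ι → ι → ℝ} (hf : ∀ i j, f j i = f i j)
    (d : ι → ℝ) :
    ∑ i, ∑ j ∈ univ.erase i, (d i + d j) / 2 * f i j = ∑ i, d i * ∑ j ∈ univ.erase i, f i j := by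
  have hswap := sum_sum_erase_comm fun i j => d j * f i j
  simp only [hf] at hswap
  simp only [add_div, add_mul, sum_add_distrib, div_mul_eq_mul_div, ← sum_div, hswap, mul_sum]
  ring

theorem Matrix.trace_mul_nonneg_of_diagDominant {H M : Matrix ι ι ℝ} (hH₀ : ∀ i, 0 ≤ H i i)
    (hH : ∀ i j, i ≠ j → 2 * |H i j| ≤ H i i + H j j) (hM : M.IsSymm)
    (hdd : ∀ i, ∑ j ∈ univ.erase i, |M i j| ≤ M i i) : 0 ≤ (H * M).trace := by
  have offDiag_bound : ∀ i, ∀ j ∈ univ.erase i,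
      -((H i i + H j j) / 2 * |M i j|) ≤ H i j * M i j := fun i j hj => by
    have h := hH i j (ne_of_mem_erase hj).symm
    refine neg_le_of_abs_le ?_
    rw [abs_mul]
    exact mul_le_mul_of_nonneg_right (by linarith) (abs_nonneg _)
  calc 0 ≤ ∑ i, H i i * (M i i - ∑ j ∈ univ.erase i, |M i j|) :=
        sum_nonneg fun i _ => mul_nonneg (hH₀ i) (sub_nonneg.2 (hdd i))
    _ = ∑ i, (H i i * M i i - ∑ j ∈ univ.erase i, (H i i + H j j) / 2 * |M i j|) := by
        simp only [mul_sub, sum_sub_distrib]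
        rw [← sum_sum_erase_average_mul (f := fun i j => |M i j|) (fun i j => by rw [hM.apply])]
    _ ≤ ∑ i, (H i i * M i i + ∑ j ∈ univ.erase i, H i j * M i j) := by
        gcongr with i
        rw [sub_eq_add_neg, ← sum_neg_distrib]
        exact add_le_add le_rfl (sum_le_sum (offDiag_bound i))
    _ = (H * M).trace := by
        rw [trace_mul_eq_sum_mul_apply H hM]
        exact sum_congr rfl fun i _ => add_sum_erase _ (fun j => H i j * M i j) (mem_univ i)

noncomputable def Matrix.signStar (M : Matrix ι ι ℝ) (i : ι) : Matrix ι ι ℝ :=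
  of fun p q => if p = i then (if q = i then 1 else -(SignType.sign (M i q) : ℝ) / 2)
    else if q = i then -(SignType.sign (M i p) : ℝ) / 2 else 0

theorem Matrix.signStar_mem_parabolicConeFullR {n : ℕ} (M : Matrix (Fin n) (Fin n) ℝ)
    (i : Fin n) : M.signStar i ∈ ParabolicConeFullR n := by
  have two_mul_abs_half_sign_le (x : ℝ) : 2 * |-(SignType.sign x : ℝ) / 2| ≤ 1 := by
    rcases SignType.sign x with _ | _ | _ <;> norm_num
  refine ⟨?_, fun p => ?_, fun p q hpq => ?_⟩
  · ext p q
    simp only [transpose_apply, signStar, of_apply]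
    split_ifs <;> simp_all
  · simp only [signStar, of_apply]
    split_ifs <;> norm_num
  · rcases eq_or_ne p i with rfl | hp
    · simp [signStar, hpq.symm, two_mul_abs_half_sign_le]
    · rcases eq_or_ne q i with rfl | hq
      · simp [signStar, hp, two_mul_abs_half_sign_le]
      · simp [signStar, hp, hq]

theorem Matrix.trace_signStar_mul {M : Matrix ι ι ℝ} (hM : M.IsSymm) (i : ι) :
    (M.signStar i * M).trace = M i i - ∑ j ∈ univ.erase i, |M i j| := by
  have half_sign_mul (x : ℝ) : -(SignType.sign x : ℝ) / 2 * x = -(|x| / 2) := by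
    rw [← sign_mul_self x]
    ring
  have row_self : ∑ q, M.signStar i i q * M i q = M i i - (∑ j ∈ univ.erase i, |M i j|) / 2 := by
    rw [← add_sum_erase _ _ (mem_univ i), sub_eq_add_neg, sum_div, ← sum_neg_distrib]
    refine congrArg₂ (· + ·) (by simp [signStar]) (sum_congr rfl fun j hj => ?_)
    simp only [signStar, of_apply, if_neg (ne_of_mem_erase hj)]
    exact half_sign_mul _
  have row_ne {p : ι} (hp : p ≠ i) : ∑ q, M.signStar i p q * M p q = -(|M i p| / 2) := by
    simp [signStar, hp, hM.apply, half_sign_mul]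
  rw [trace_mul_eq_sum_mul_apply _ hM, ← add_sum_erase _ _ (mem_univ i), row_self,
    sum_congr rfl fun p hp => row_ne (ne_of_mem_erase hp), sum_neg_distrib, ← sum_div]
  ring

theorem dualCone_ParabolicConeFullR_general (n : ℕ)
    (M : Matrix (Fin n) (Fin n) ℝ) (hM : M.IsSymm) :
    (∀ H ∈ ParabolicConeFullR n, 0 ≤ (H * M).trace) ↔
      ∀ i : Fin n, ∑ j ∈ Finset.univ.erase i, |M i j| ≤ M i i := by
  refine ⟨fun hdual i => ?_, fun hdd H ⟨_, hH₀, hH⟩ => ?_⟩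
  · have h := hdual _ (M.signStar_mem_parabolicConeFullR i)
    rw [trace_signStar_mul hM] at h
    linarith
  · exact trace_mul_nonneg_of_diagDominant hH₀ hH hM hdd

/-- The dual cone of the real parabolic cone on the complete graph is the cone of
diagonally dominant matrices with nonnegative diagonal. -/
theorem dualCone_ParabolicConeFullR (n : ℕ) (hn : 2 ≤ n)
    (M : Matrix (Fin n) (Fin n) ℝ) (hM : M.IsSymm) :
    (∀ H ∈ ParabolicConeFullR n, 0 ≤ (H * M).trace) ↔
      ∀ i : Fin n, ∑ j ∈ Finset.univ.erase i, |M i j| ≤ M i i :=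
  dualCone_ParabolicConeFullR_general n M hM
end
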